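/- Let (R,m) be a Noetherian local ring with no nonzero ideal killed by a power of m, let r ∈ m be a non-zerodivisor, and suppose there exists a ∈ R \ (r) with a·m ⊆ r·R. If moreover there exists t₀ ∈ m with a·t₀ = r, then m = (t₀) and R is a regular local ring of dimension 1. -/

import Mathlib

open Ideal

lemma Ideal.mul_mem_span_singleton_mul_iff {R : Type*} [CommRing R] {a x t : R}
    (ha : a ∈ nonZeroDivisors R) : a * x ∈ span {a * t} ↔ x ∈ span {t} := by
  simp only [mem_span_singleton, dvd_cancel_left_mem_nonZeroDivisors ha]

lemma Ideal.le_span_singleton_of_mul_mem {R : Type*} [CommRing R] {I : Ideal R} {a t : R}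
    (ha : a ∈ nonZeroDivisors R) (h : ∀ x ∈ I, a * x ∈ span {a * t}) : I ≤ span {t} :=
  fun x hx => (mul_mem_span_singleton_mul_iff ha).mp (h x hx)

theorem stmt1 (R : Type) [CommRing R] [IsLocalRing R]
    (r : R) (hr : r ∈ IsLocalRing.maximalIdeal R) (hrnzd : r ∈ nonZeroDivisors R)
    (a : R)
    (ham : ∀ x ∈ IsLocalRing.maximalIdeal R, a * x ∈ Ideal.span ({r} : Set R))
    (t₀ : R) (ht₀ : t₀ ∈ IsLocalRing.maximalIdeal R) (hat : a * t₀ = r) :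
    IsLocalRing.maximalIdeal R = Ideal.span ({t₀} : Set R) ∧
    t₀ ∈ nonZeroDivisors R ∧ IsLocalRing.maximalIdeal R ≠ ⊥ := by
  subst hat
  obtain ⟨ha, ht⟩ := mul_mem_nonZeroDivisors.mp hrnzd
  refine ⟨le_antisymm (le_span_singleton_of_mul_mem ha ham) ?_, ht, ?_⟩
  · exact (span_singleton_le_iff_mem _).mpr ht₀
  · exact (Submodule.ne_bot_iff _).mpr ⟨a * t₀, hr, nonZeroDivisors.ne_zero hrnzd⟩
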